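/- Let R be the Laurent polynomial ring over ℂ in the variables Y_{j,n} (j ∈ {1,2}, n ∈ ℤ). Take incidence numbers I_{12} = 1, I_{21} = 2 (type B₂), and set A_{1,n} = Y_{1,n+1} Y_{1,n−1} Y_{2,n}^{−2}, A_{2,n} = Y_{2,n+1} Y_{2,n−1} Y_{1,n}^{−1}. Let S_1^−, S_2^− be the associated screening derivations on R. Then the elements F₁ = Y_{1,0} + Y_{1,2}^{−1} Y_{2,1}² + 2 Y_{2,1} Y_{2,3}^{−1} + Y_{2,3}^{−2} Y_{1,2} + Y_{1,4}^{−1} and F₂ = Y_{2,0} + Y_{2,2}^{−1} Y_{1,1} + Y_{1,3}^{−1} Y_{2,2} + Y_{2,4}^{−1} both lie in Ker S_1^− ∩ Ker S_2^−; moreover, the unique dominant monomial (a monomial involving no negative powers of the variables) occurring in F₁ is Y_{1,0}, and in F₂ it is Y_{2,0}. -/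

import Mathlib

/-- Exponent lattice of the Laurent polynomial ring in the variables `Y_{j,n}`,
`j ∈ {1,2}`, `n ∈ ℤ` (index `0` stands for the node `1`, index `1` for the node `2`). -/
abbrev LExp2 : Type := (Fin 2 × ℤ) →₀ ℤ

/-- The Laurent polynomial ring over `ℂ` in the variables `Y_{j,n}`. -/
abbrev LRing2 : Type := AddMonoidAlgebra ℂ LExp2

/-- The (invertible) monomial with exponent vector `v`. -/
noncomputable def Ym (v : LExp2) : LRing2 := AddMonoidAlgebra.single v 1

/-- The exponent vector of `Y_{j,n}^k`. -/
noncomputable def E (j : Fin 2) (n k : ℤ) : LExp2 := Finsupp.single (j, n) k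

/-- Exponent of `A_{1,n} = Y_{1,n+1} Y_{1,n−1} Y_{2,n}^{−2}` (type `B₂`: `I₁₂ = 1`, `I₂₁ = 2`). -/
noncomputable def A1B2 (n : ℤ) : LExp2 := E 0 (n + 1) 1 + E 0 (n - 1) 1 + E 1 n (-2)

/-- Exponent of `A_{2,n} = Y_{2,n+1} Y_{2,n−1} Y_{1,n}^{−1}`. -/
noncomputable def A2B2 (n : ℤ) : LExp2 := E 1 (n + 1) 1 + E 1 (n - 1) 1 + E 0 n (-1)

/-- Relations submodule `e_{n+1} − A_n e_{n−1}` for a family of monomial exponents. -/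
noncomputable def scrRel (Av : ℤ → LExp2) : Submodule LRing2 (ℤ →₀ LRing2) :=
  Submodule.span LRing2
    {x | ∃ n : ℤ, x =
      Finsupp.single (n + 1) (1 : LRing2) - Ym (Av n) • Finsupp.single (n - 1) (1 : LRing2)}

/-- Target module of the screening operator. -/
noncomputable abbrev ScrMod (Av : ℤ → LExp2) : Type := (ℤ →₀ LRing2) ⧸ scrRel Av

/-- The class `ē_n` in the quotient module. -/
noncomputable def ebar (Av : ℤ → LExp2) (n : ℤ) : ScrMod Av :=
  Submodule.Quotient.mk (Finsupp.single n (1 : LRing2))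

/-- `F₁ = Y_{1,0} + Y_{1,2}^{−1} Y_{2,1}² + 2 Y_{2,1} Y_{2,3}^{−1} + Y_{2,3}^{−2} Y_{1,2} + Y_{1,4}^{−1}`. -/
noncomputable def F1B2 : LRing2 :=
  Ym (E 0 0 1) + Ym (E 0 2 (-1) + E 1 1 2) + 2 * Ym (E 1 1 1 + E 1 3 (-1))
    + Ym (E 1 3 (-2) + E 0 2 1) + Ym (E 0 4 (-1))

/-- `F₂ = Y_{2,0} + Y_{2,2}^{−1} Y_{1,1} + Y_{1,3}^{−1} Y_{2,2} + Y_{2,4}^{−1}`. -/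
noncomputable def F2B2 : LRing2 :=
  Ym (E 1 0 1) + Ym (E 1 2 (-1) + E 0 1 1) + Ym (E 0 3 (-1) + E 1 2 1) + Ym (E 1 4 (-1))

/-!
A derivation `D` of the Laurent polynomial ring is determined on monomials by its logarithmic
derivative, an additive map on exponents. For `S_i⁻` the relation `ē_{n+1} = A_{i,n} ē_{n-1}`
makes `1 + A_{i,n}⁻¹` behave like a monomial with logarithmic derivative `-ē_{n-1}`, so
`m (1 + A_{i,n}⁻¹)^r` is killed by `S_i⁻` as soon as `m` has logarithmic derivative `r ē_{n-1}`.
For each `i`, `F₁` and `F₂` are sums of such `i`-strings and of monomials without `Y_i`; e.g.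
`F₁ = Y_{1,0} + Y_{1,2}⁻¹ Y_{2,1}² (1 + A_{2,2}⁻¹)² + Y_{1,4}⁻¹` for `i = 2`.
Every monomial of `F_j` other than `Y_{j,0}` has a negative exponent.
-/

open AddMonoidAlgebra

namespace Derivation

section Power

variable {R A M : Type*} [CommSemiring R] [CommSemiring A] [Algebra R A] [AddCommMonoid M]
  [Module A M] [Module R M] (D : Derivation R A M)

theorem map_pow_of_map_eq_smul {q : A} {z : M} (h : D q = q • z) (r : ℕ) :
    D (q ^ r) = r • q ^ r • z := by
  rcases r with _ | r
  · simp
  · rw [leibniz_pow, h, smul_smul, ← pow_succ, Nat.add_sub_cancel]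

end Power

section MonoidAlgebra

variable {R k G M : Type*} [CommSemiring R] [CommSemiring k] [Algebra R k] [AddCommGroup G]

section

variable [AddCommMonoid M] [Module k[G] M] [Module R M] (D : Derivation R k[G] M)

noncomputable def dlogSingle : G →+ M where
  toFun v := single (-v) (1 : k) • D (single v 1)
  map_zero' := by simp [← one_def]
  map_add' v w := by
    have h : single (v + w) (1 : k) = single v 1 * single w 1 := by
      rw [single_mul_single, mul_one]
    rw [h, leibniz, smul_add, smul_smul, smul_smul, single_mul_single, single_mul_single, mul_one,
      add_comm]
    congr 3 <;> abel

theorem dlogSingle_apply (v : G) : D.dlogSingle v = single (-v) (1 : k) • D (single v 1) := rfl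

theorem map_single_one (v : G) : D (single v 1) = single v (1 : k) • D.dlogSingle v := by
  rw [dlogSingle_apply, smul_smul, single_mul_single, mul_one, add_neg_cancel, ← one_def,
    one_smul]

end

theorem map_single_mul_one_add_single_neg_pow [AddCommGroup M] [Module k[G] M] [Module R M]
    (D : Derivation R k[G] M) {v a : G} {y : M} {r : ℕ}
    (hv : D.dlogSingle v = r • y) (ha : D.dlogSingle a = single a (1 : k) • y + y) :
    D (single v 1 * (1 + single (-a) 1) ^ r) = 0 := by
  have hq : D (1 + single (-a) (1 : k)) = (1 + single (-a) (1 : k)) • -y := by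
    rw [map_add, map_one_eq_zero, zero_add, map_single_one, map_neg, ha, smul_neg, smul_add,
      smul_smul, single_mul_single, mul_one, neg_add_cancel, ← one_def, one_smul, add_smul,
      one_smul, smul_neg, neg_add, add_comm]
  rw [leibniz, map_pow_of_map_eq_smul D hq, map_single_one, hv,
    smul_comm (_ ^ r) (single v (1 : k)), smul_comm _ r y, smul_neg, smul_neg, ← smul_add,
    neg_add_cancel, smul_zero]

end MonoidAlgebra

end Derivation

theorem Finsupp.mem_support_single_add_and_iff {α M : Type*} [AddCommMonoid M] {P : α → Prop}
    {a : α} {c : M} {f : α →₀ M} (hc : c ≠ 0) (ha : P a) (hf : f ∈ supported M ℕ {b | ¬ P b})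
    (b : α) : b ∈ (single a c + f).support ∧ P b ↔ b = a := by
  have hfa : ∀ b, P b → f b = 0 := fun b hb =>
    notMem_support_iff.1 fun hmem => (mem_supported ℕ f).1 hf hmem hb
  constructor
  · rintro ⟨hb, hPb⟩
    by_contra hba
    rw [mem_support_iff, add_apply, single_eq_of_ne hba, hfa b hPb, add_zero] at hb
    exact hb rfl
  · rintro rfl
    rw [mem_support_iff, add_apply, single_eq_same, hfa b ha, add_zero]
    exact ⟨hc, ha⟩

theorem Ym_mul (v w : LExp2) : Ym v * Ym w = Ym (v + w) := by
  rw [Ym, Ym, Ym, single_mul_single, mul_one]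

theorem Ym_mul_one_add_Ym_neg_pow_one (v a : LExp2) :
    Ym v * (1 + Ym (-a)) ^ 1 = Ym v + Ym (v - a) := by
  rw [pow_one, mul_add, mul_one, Ym_mul, sub_eq_add_neg]

theorem Ym_mul_one_add_Ym_neg_sq (v a : LExp2) :
    Ym v * (1 + Ym (-a)) ^ 2 = Ym v + 2 * Ym (v - a) + Ym (v - a - a) := by
  rw [add_sq, mul_one, one_pow, mul_add, mul_add, mul_one, mul_left_comm, Ym_mul, sq, Ym_mul,
    Ym_mul, sub_eq_add_neg, sub_eq_add_neg, add_assoc v]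

theorem E_eq_zsmul (j : Fin 2) (n k : ℤ) : E j n k = k • E j n 1 := by
  rw [E, E, Finsupp.smul_single, smul_eq_mul, mul_one]

theorem ebar_add_one {Av : ℤ → LExp2} (n : ℤ) :
    ebar Av (n + 1) = Ym (Av n) • ebar Av (n - 1) := by
  rw [← sub_eq_zero, ebar, ebar, ← Submodule.Quotient.mk_smul, ← Submodule.Quotient.mk_sub,
    Submodule.Quotient.mk_eq_zero]
  exact Submodule.subset_span ⟨n, rfl⟩

section Screening

variable {Av : ℤ → LExp2} {i : Fin 2} {D : Derivation ℂ LRing2 (ScrMod Av)}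

theorem dlogSingle_E
    (hD : ∀ j n, D (Ym (E j n 1)) = if j = i then Ym (E i n 1) • ebar Av n else 0)
    (j : Fin 2) (n k : ℤ) : D.dlogSingle (E j n k) = if j = i then k • ebar Av n else 0 := by
  unfold Ym at hD
  rw [E_eq_zsmul, map_zsmul, Derivation.dlogSingle_apply, hD]
  split_ifs with hji
  · rw [hji, smul_smul, single_mul_single, mul_one, neg_add_cancel, ← one_def, one_smul]
  · rw [smul_zero, smul_zero]

theorem map_Ym_mul_one_add_Ym_neg_pow
    (hD : ∀ j n, D (Ym (E j n 1)) = if j = i then Ym (E i n 1) • ebar Av n else 0)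
    {j : Fin 2} (hji : j ≠ i) {n c : ℤ} (hA : Av n = E i (n + 1) 1 + E i (n - 1) 1 + E j n c)
    {v : LExp2} {r : ℕ} (hv : D.dlogSingle v = r • ebar Av (n - 1)) :
    D (Ym v * (1 + Ym (-Av n)) ^ r) = 0 := by
  refine D.map_single_mul_one_add_single_neg_pow hv ?_
  nth_rewrite 1 [hA]
  rw [map_add, map_add, dlogSingle_E hD, dlogSingle_E hD, dlogSingle_E hD, if_pos rfl, if_pos rfl,
    if_neg hji, one_smul, one_smul, add_zero, ebar_add_one, Ym]

end Screening

theorem F1B2_screening1 {D : Derivation ℂ LRing2 (ScrMod A1B2)}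
    (hD : ∀ j n, D (Ym (E j n 1)) = if j = 0 then Ym (E 0 n 1) • ebar A1B2 n else 0) :
    D F1B2 = 0 := by
  have hF : F1B2 = Ym (E 0 0 1) * (1 + Ym (-A1B2 1)) ^ 1 + 2 * Ym (E 1 1 1 + E 1 3 (-1))
      + Ym (E 1 3 (-2) + E 0 2 1) * (1 + Ym (-A1B2 3)) ^ 1 := by
    rw [Ym_mul_one_add_Ym_neg_pow_one, Ym_mul_one_add_Ym_neg_pow_one,
      show E 0 0 1 - A1B2 1 = E 0 2 (-1) + E 1 1 2 by
        ext ⟨j, n⟩; simp [E, A1B2, Finsupp.single_apply, Prod.ext_iff]; omega,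
      show E 1 3 (-2) + E 0 2 1 - A1B2 3 = E 0 4 (-1) by
        ext ⟨j, n⟩; simp [E, A1B2, Finsupp.single_apply, Prod.ext_iff]; omega, F1B2]
    abel
  have hA (n : ℤ) : A1B2 n = E 0 (n + 1) 1 + E 0 (n - 1) 1 + E 1 n (-2) := rfl
  have hconst : D (Ym (E 1 1 1 + E 1 3 (-1))) = 0 := by
    rw [Ym, D.map_single_one]; simp [dlogSingle_E hD]
  rw [hF, map_add, map_add, two_mul, map_add, hconst,
    map_Ym_mul_one_add_Ym_neg_pow hD (by decide) (hA 1),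
    map_Ym_mul_one_add_Ym_neg_pow hD (by decide) (hA 3)]
  · simp
  · simp [dlogSingle_E hD]
  · simp [dlogSingle_E hD]

theorem F1B2_screening2 {D : Derivation ℂ LRing2 (ScrMod A2B2)}
    (hD : ∀ j n, D (Ym (E j n 1)) = if j = 1 then Ym (E 1 n 1) • ebar A2B2 n else 0) :
    D F1B2 = 0 := by
  have hF : F1B2 = Ym (E 0 0 1) + Ym (E 0 2 (-1) + E 1 1 2) * (1 + Ym (-A2B2 2)) ^ 2
      + Ym (E 0 4 (-1)) := by
    rw [Ym_mul_one_add_Ym_neg_sq,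
      show E 0 2 (-1) + E 1 1 2 - A2B2 2 = E 1 1 1 + E 1 3 (-1) by
        ext ⟨j, n⟩; simp [E, A2B2, Finsupp.single_apply, Prod.ext_iff]; omega,
      show E 1 1 1 + E 1 3 (-1) - A2B2 2 = E 1 3 (-2) + E 0 2 1 by
        ext ⟨j, n⟩; simp [E, A2B2, Finsupp.single_apply, Prod.ext_iff]; omega, F1B2]
    abel
  have hA (n : ℤ) : A2B2 n = E 1 (n + 1) 1 + E 1 (n - 1) 1 + E 0 n (-1) := rfl
  rw [hF, map_add, map_add, map_Ym_mul_one_add_Ym_neg_pow hD (by decide) (hA 2), Ym, Ym,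
    D.map_single_one, D.map_single_one]
  · simp [dlogSingle_E hD]
  · simp [dlogSingle_E hD, two_smul]

theorem F2B2_screening1 {D : Derivation ℂ LRing2 (ScrMod A1B2)}
    (hD : ∀ j n, D (Ym (E j n 1)) = if j = 0 then Ym (E 0 n 1) • ebar A1B2 n else 0) :
    D F2B2 = 0 := by
  have hF : F2B2 = Ym (E 1 0 1) + Ym (E 1 2 (-1) + E 0 1 1) * (1 + Ym (-A1B2 2)) ^ 1
      + Ym (E 1 4 (-1)) := by
    rw [Ym_mul_one_add_Ym_neg_pow_one,
      show E 1 2 (-1) + E 0 1 1 - A1B2 2 = E 0 3 (-1) + E 1 2 1 by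
        ext ⟨j, n⟩; simp [E, A1B2, Finsupp.single_apply, Prod.ext_iff]; omega, F2B2]
    abel
  have hA (n : ℤ) : A1B2 n = E 0 (n + 1) 1 + E 0 (n - 1) 1 + E 1 n (-2) := rfl
  rw [hF, map_add, map_add, map_Ym_mul_one_add_Ym_neg_pow hD (by decide) (hA 2), Ym, Ym,
    D.map_single_one, D.map_single_one]
  · simp [dlogSingle_E hD]
  · simp [dlogSingle_E hD]

theorem F2B2_screening2 {D : Derivation ℂ LRing2 (ScrMod A2B2)}
    (hD : ∀ j n, D (Ym (E j n 1)) = if j = 1 then Ym (E 1 n 1) • ebar A2B2 n else 0) :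
    D F2B2 = 0 := by
  have hF : F2B2 = Ym (E 1 0 1) * (1 + Ym (-A2B2 1)) ^ 1
      + Ym (E 0 3 (-1) + E 1 2 1) * (1 + Ym (-A2B2 3)) ^ 1 := by
    rw [Ym_mul_one_add_Ym_neg_pow_one, Ym_mul_one_add_Ym_neg_pow_one,
      show E 1 0 1 - A2B2 1 = E 1 2 (-1) + E 0 1 1 by
        ext ⟨j, n⟩; simp [E, A2B2, Finsupp.single_apply, Prod.ext_iff]; omega,
      show E 0 3 (-1) + E 1 2 1 - A2B2 3 = E 1 4 (-1) by
        ext ⟨j, n⟩; simp [E, A2B2, Finsupp.single_apply, Prod.ext_iff]; omega, F2B2]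
    abel
  have hA (n : ℤ) : A2B2 n = E 1 (n + 1) 1 + E 1 (n - 1) 1 + E 0 n (-1) := rfl
  rw [hF, map_add, map_Ym_mul_one_add_Ym_neg_pow hD (by decide) (hA 1),
    map_Ym_mul_one_add_Ym_neg_pow hD (by decide) (hA 3), add_zero]
  · simp [dlogSingle_E hD]
  · simp [dlogSingle_E hD]

theorem F1B2_dominant_iff (v : LExp2) :
    (v ∈ F1B2.coeff.support ∧ ∀ p, 0 ≤ v p) ↔ v = E 0 0 1 := by
  have hF : F1B2.coeff = Finsupp.single (E 0 0 1) 1 + (Ym (E 0 2 (-1) + E 1 1 2)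
      + (Ym (E 1 1 1 + E 1 3 (-1)) + Ym (E 1 1 1 + E 1 3 (-1))) + Ym (E 1 3 (-2) + E 0 2 1)
      + Ym (E 0 4 (-1))).coeff := by
    rw [F1B2, two_mul]; simp only [add_assoc]; rfl
  rw [hF]
  refine Finsupp.mem_support_single_add_and_iff (P := fun w : LExp2 => ∀ p, 0 ≤ w p) one_ne_zero
    (fun p => Finsupp.single_nonneg.2 zero_le_one p) ?_ v
  simp only [coeff_add]
  refine add_mem (add_mem (add_mem ?_ (add_mem ?_ ?_)) ?_) ?_ <;>
    refine Finsupp.single_mem_supported ℕ _ fun h => ?_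
  · exact absurd (h (0, 2)) (by simp [E])
  · exact absurd (h (1, 3)) (by simp [E])
  · exact absurd (h (1, 3)) (by simp [E])
  · exact absurd (h (1, 3)) (by simp [E])
  · exact absurd (h (0, 4)) (by simp [E])

theorem F2B2_dominant_iff (v : LExp2) :
    (v ∈ F2B2.coeff.support ∧ ∀ p, 0 ≤ v p) ↔ v = E 1 0 1 := by
  have hF : F2B2.coeff = Finsupp.single (E 1 0 1) 1 + (Ym (E 1 2 (-1) + E 0 1 1)
      + Ym (E 0 3 (-1) + E 1 2 1) + Ym (E 1 4 (-1))).coeff := by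
    rw [F2B2]; simp only [add_assoc]; rfl
  rw [hF]
  refine Finsupp.mem_support_single_add_and_iff (P := fun w : LExp2 => ∀ p, 0 ≤ w p) one_ne_zero
    (fun p => Finsupp.single_nonneg.2 zero_le_one p) ?_ v
  simp only [coeff_add]
  refine add_mem (add_mem ?_ ?_) ?_ <;> refine Finsupp.single_mem_supported ℕ _ fun h => ?_
  · exact absurd (h (1, 2)) (by simp [E])
  · exact absurd (h (0, 3)) (by simp [E])
  · exact absurd (h (1, 4)) (by simp [E])

/-- For type `B₂`, the elements `F₁, F₂` lie in `Ker S₁⁻ ∩ Ker S₂⁻`, and the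
unique dominant monomial occurring in `F₁` (resp. `F₂`) is `Y_{1,0}` (resp. `Y_{2,0}`). -/
theorem stmt4
    (S1 : LRing2 →ₗ[ℂ] ScrMod A1B2) (S2 : LRing2 →ₗ[ℂ] ScrMod A2B2)
    (hLeib1 : ∀ x y : LRing2, S1 (x * y) = x • S1 y + y • S1 x)
    (hLeib2 : ∀ x y : LRing2, S2 (x * y) = x • S2 y + y • S2 x)
    (hval1 : ∀ (j : Fin 2) (n : ℤ),
      S1 (Ym (E j n 1)) = if j = 0 then Ym (E 0 n 1) • ebar A1B2 n else 0)
    (hval2 : ∀ (j : Fin 2) (n : ℤ),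
      S2 (Ym (E j n 1)) = if j = 1 then Ym (E 1 n 1) • ebar A2B2 n else 0) :
    (S1 F1B2 = 0 ∧ S2 F1B2 = 0 ∧ S1 F2B2 = 0 ∧ S2 F2B2 = 0) ∧
    (∀ v : LExp2, (v ∈ F1B2.coeff.support ∧ ∀ p, 0 ≤ v p) ↔ v = E 0 0 1) ∧
    (∀ v : LExp2, (v ∈ F2B2.coeff.support ∧ ∀ p, 0 ≤ v p) ↔ v = E 1 0 1) := by
  let D1 := Derivation.mk' S1 hLeib1
  let D2 := Derivation.mk' S2 hLeib2
  exact ⟨⟨F1B2_screening1 (D := D1) hval1, F1B2_screening2 (D := D2) hval2,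
    F2B2_screening1 (D := D1) hval1, F2B2_screening2 (D := D2) hval2⟩,
    F1B2_dominant_iff, F2B2_dominant_iff⟩
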